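/- arXiv:2507.23602 — 6 statements merged into one kernel-verified Lean document; each statement's English description precedes it below -/
import Mathlib

section
/- Let N ≥ 2 and set ν_min = min_j ν_j < 1 and B = sup_{x∈Ω, 1≤j≤N} c(x,y_j). Then for every ψ ∈ ℝ^N with ∑_{j=1}^N ν_j ψ_j = 0, the regularized semi-discrete dual functional satisfies J_ε(ψ) ≥ (ν_min/(1−ν_min))·max_j |ψ_j| − B + ε·log ν_min. Consequently J_ε is coercive on the hyperplane {ψ : ∑_j ν_j ψ_j = 0}: J_ε(ψ_n) → +∞ for every sequence ψ_n in this hyperplane with ‖ψ_n‖ → ∞. -/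
open MeasureTheory

/-- The regularized semi-discrete dual functional. -/
noncomputable def Jdual (d N : ℕ) (Ω : Set (EuclideanSpace ℝ (Fin d)))
    (μ : Measure (EuclideanSpace ℝ (Fin d)))
    (y : Fin N → EuclideanSpace ℝ (Fin d)) (ν : Fin N → ℝ)
    (c : EuclideanSpace ℝ (Fin d) → EuclideanSpace ℝ (Fin d) → ℝ) (ε : ℝ)
    (ψ : Fin N → ℝ) : ℝ :=
  (∫ x in Ω, ε * Real.log (∑ j, ν j * Real.exp ((ψ j - c x (y j)) / ε)) ∂μ)
    - ∑ j, ψ j * ν j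

/-- with `ν_min = min_j ν_j < 1` and `B = sup_{x∈Ω,j} c(x,y_j)`, every `ψ`
with `∑_j ν_j ψ_j = 0` satisfies
`J_ε(ψ) ≥ (ν_min/(1−ν_min))·max_j |ψ_j| − B + ε·log ν_min`; consequently `J_ε` is
coercive on the hyperplane `{ψ : ∑_j ν_j ψ_j = 0}`. -/
theorem stmt_4 (d N : ℕ) (hN : 2 ≤ N)
    (Ω : Set (EuclideanSpace ℝ (Fin d))) (hΩne : Ω.Nonempty) (hΩc : IsCompact Ω)
    (μ : Measure (EuclideanSpace ℝ (Fin d))) [IsProbabilityMeasure μ] (hμΩ : μ Ω = 1)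
    (y : Fin N → EuclideanSpace ℝ (Fin d))
    (ν : Fin N → ℝ) (hν : ∀ j, 0 < ν j) (hνsum : ∑ j, ν j = 1)
    (c : EuclideanSpace ℝ (Fin d) → EuclideanSpace ℝ (Fin d) → ℝ)
    (hc : Continuous fun p : EuclideanSpace ℝ (Fin d) × EuclideanSpace ℝ (Fin d) => c p.1 p.2)
    (ε : ℝ) (hε : 0 < ε)
    (νmin : ℝ) (hνmin : νmin = ⨅ j, ν j) (hνlt : νmin < 1)
    (B : ℝ) (hB : B = sSup {r : ℝ | ∃ x ∈ Ω, ∃ j : Fin N, r = c x (y j)}) :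
    (∀ ψ : EuclideanSpace ℝ (Fin N), (∑ j, ν j * ψ j) = 0 →
      (νmin / (1 - νmin)) * (⨆ j, |ψ j|) - B + ε * Real.log νmin ≤
        Jdual d N Ω μ y ν c ε (fun j => ψ j)) ∧
    (∀ ψ : ℕ → EuclideanSpace ℝ (Fin N), (∀ n, (∑ j, ν j * ψ n j) = 0) →
      Filter.Tendsto (fun n => ‖ψ n‖) Filter.atTop Filter.atTop →
      Filter.Tendsto (fun n => Jdual d N Ω μ y ν c ε (fun j => ψ n j))
        Filter.atTop Filter.atTop) := by
  have hNpos : 0 < N := by omega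
  haveI hneF : Nonempty (Fin N) := ⟨⟨0, hNpos⟩⟩
  -- facts about νmin
  have hbddb : BddBelow (Set.range ν) := (Set.finite_range ν).bddBelow
  have hνminle : ∀ j, νmin ≤ ν j := fun j => hνmin ▸ ciInf_le hbddb j
  have hνminpos : 0 < νmin := by
    obtain ⟨j0, -, hj0⟩ := Finset.exists_min_image Finset.univ ν ⟨⟨0, hNpos⟩, Finset.mem_univ _⟩
    have : νmin = ν j0 :=
      le_antisymm (hνminle j0) (hνmin ▸ le_ciInf fun j => hj0 j (Finset.mem_univ j))
    rw [this]; exact hν j0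
  have h1ν : 0 < 1 - νmin := by linarith
  have hhalf : νmin ≤ 1 / 2 := by
    have h1 : (N : ℝ) * νmin ≤ ∑ j, ν j := by
      calc (N : ℝ) * νmin = ∑ _j : Fin N, νmin := by
            simp [Finset.sum_const, mul_comm]
        _ ≤ ∑ j, ν j := Finset.sum_le_sum fun j _ => hνminle j
    have hN2 : (2 : ℝ) ≤ N := by exact_mod_cast hN
    rw [hνsum] at h1
    nlinarith
  -- B bounds c on Ω
  have hg : Continuous fun p : EuclideanSpace ℝ (Fin d) × Fin N => c p.1 (y p.2) :=
    hc.comp (continuous_fst.prodMk ((continuous_of_discreteTopology).comp continuous_snd))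
  have hset : {r : ℝ | ∃ x ∈ Ω, ∃ j : Fin N, r = c x (y j)} =
      (fun p : EuclideanSpace ℝ (Fin d) × Fin N => c p.1 (y p.2)) '' (Ω ×ˢ Set.univ) := by
    ext r
    constructor
    · rintro ⟨x, hx, j, rfl⟩; exact ⟨(x, j), ⟨hx, trivial⟩, rfl⟩
    · rintro ⟨⟨x, j⟩, ⟨hx, -⟩, rfl⟩; exact ⟨x, hx, j, rfl⟩
  have hBdd : BddAbove {r : ℝ | ∃ x ∈ Ω, ∃ j : Fin N, r = c x (y j)} := by
    rw [hset]; exact ((hΩc.prod isCompact_univ).image hg).bddAbove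
  have hBge : ∀ x ∈ Ω, ∀ j, c x (y j) ≤ B := fun x hx j =>
    hB ▸ le_csSup hBdd ⟨x, hx, j, rfl⟩
  -- key algebraic lemma
  have key : ∀ ψ : Fin N → ℝ, (∑ j, ν j * ψ j) = 0 →
      ∃ k, (νmin / (1 - νmin)) * (⨆ j, |ψ j|) ≤ ψ k := by
    intro ψ hψ
    obtain ⟨j1, -, hj1⟩ := Finset.exists_max_image Finset.univ ψ ⟨⟨0, hNpos⟩, Finset.mem_univ _⟩
    obtain ⟨j2, -, hj2⟩ := Finset.exists_max_image Finset.univ (fun j => |ψ j|)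
      ⟨⟨0, hNpos⟩, Finset.mem_univ _⟩
    have hj1' : ∀ j, ψ j ≤ ψ j1 := fun j => hj1 j (Finset.mem_univ j)
    have hj2' : ∀ j, |ψ j| ≤ |ψ j2| := fun j => hj2 j (Finset.mem_univ j)
    have hMle : (⨆ j, |ψ j|) = |ψ j2| :=
      le_antisymm (ciSup_le hj2') (le_ciSup (f := fun j => |ψ j|) (Set.finite_range _).bddAbove j2)
    set M := ⨆ j, |ψ j| with hM
    have hM0 : 0 ≤ M := hMle ▸ abs_nonneg _
    have hcoeff : νmin / (1 - νmin) ≤ 1 := by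
      rw [div_le_one h1ν]; linarith
    -- ψ j1 ≥ 0
    have hj1nn : 0 ≤ ψ j1 := by
      by_contra h
      push_neg at h
      have : (∑ j, ν j * ψ j) < 0 := by
        have hlt : ∀ j ∈ Finset.univ, ν j * ψ j ≤ ν j * ψ j1 := fun j _ =>
          mul_le_mul_of_nonneg_left (hj1' j) (hν j).le
        have h1 : (∑ j, ν j * ψ j) ≤ ∑ j, ν j * ψ j1 := Finset.sum_le_sum hlt
        have h2 : (∑ j, ν j * ψ j1) = ψ j1 := by
          rw [← Finset.sum_mul, hνsum, one_mul]
        linarith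
      linarith [hψ ▸ this]
    refine ⟨j1, ?_⟩
    rcases le_or_gt 0 (ψ j2) with hs | hs
    · have hMe : M = ψ j2 := by rw [hMle, abs_of_nonneg hs]
      calc νmin / (1 - νmin) * M ≤ 1 * M := mul_le_mul_of_nonneg_right hcoeff hM0
        _ = ψ j2 := by rw [one_mul, hMe]
        _ ≤ ψ j1 := hj1' j2
    · have hMe : M = -ψ j2 := by rw [hMle, abs_of_neg hs]
      -- decompose the sum
      have herase : ν j2 * ψ j2 + ∑ j ∈ Finset.univ.erase j2, ν j * ψ j = ∑ j, ν j * ψ j :=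
        Finset.add_sum_erase Finset.univ (fun j => ν j * ψ j) (Finset.mem_univ j2)
      have heraseν : ν j2 + ∑ j ∈ Finset.univ.erase j2, ν j = 1 := by
        rw [Finset.add_sum_erase Finset.univ ν (Finset.mem_univ j2), hνsum]
      have hle : (∑ j ∈ Finset.univ.erase j2, ν j * ψ j) ≤
          (∑ j ∈ Finset.univ.erase j2, ν j) * ψ j1 := by
        rw [Finset.sum_mul]
        exact Finset.sum_le_sum fun j _ => mul_le_mul_of_nonneg_left (hj1' j) (hν j).le
      have hkey : ν j2 * M ≤ (1 - ν j2) * ψ j1 := by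
        have h0 : (0 : ℝ) = ν j2 * ψ j2 + ∑ j ∈ Finset.univ.erase j2, ν j * ψ j := by
          rw [herase, hψ]
        have hsumν : (∑ j ∈ Finset.univ.erase j2, ν j) = 1 - ν j2 := by linarith
        rw [hsumν] at hle
        have : ν j2 * ψ j2 = -(ν j2 * M) := by rw [hMe]; ring
        nlinarith
      have hν2 := hνminle j2
      rw [div_mul_eq_mul_div, div_le_iff₀ h1ν]
      nlinarith
  -- main lower bound
  have main : ∀ ψ : Fin N → ℝ, (∑ j, ν j * ψ j) = 0 →
      (νmin / (1 - νmin)) * (⨆ j, |ψ j|) - B + ε * Real.log νmin ≤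
        Jdual d N Ω μ y ν c ε ψ := by
    intro ψ hψ
    obtain ⟨k, hk⟩ := key ψ hψ
    set f : EuclideanSpace ℝ (Fin d) → ℝ :=
      fun x => ε * Real.log (∑ j, ν j * Real.exp ((ψ j - c x (y j)) / ε)) with hf
    have hccont : ∀ j : Fin N, Continuous fun x : EuclideanSpace ℝ (Fin d) => c x (y j) :=
      fun j => hc.comp (continuous_id.prodMk continuous_const)
    have hSpos : ∀ x, 0 < ∑ j, ν j * Real.exp ((ψ j - c x (y j)) / ε) := fun x =>
      Finset.sum_pos (fun j _ => mul_pos (hν j) (Real.exp_pos _)) Finset.univ_nonempty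
    have hfc : Continuous f := by
      apply continuous_const.mul
      apply Continuous.log
      · exact continuous_finset_sum _ fun j _ =>
          continuous_const.mul (((continuous_const.sub (hccont j)).div_const ε).rexp)
      · exact fun x => (hSpos x).ne'
    have hfint : IntegrableOn f Ω μ := hfc.continuousOn.integrableOn_compact hΩc
    have hpt : ∀ x ∈ Ω, ψ k - B + ε * Real.log νmin ≤ f x := by
      intro x hx
      have hterm : ν k * Real.exp ((ψ k - c x (y k)) / ε) ≤
          ∑ j, ν j * Real.exp ((ψ j - c x (y j)) / ε) :=
        Finset.single_le_sum (f := fun j => ν j * Real.exp ((ψ j - c x (y j)) / ε))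
          (fun j _ => (mul_pos (hν j) (Real.exp_pos _)).le) (Finset.mem_univ k)
      have hlog : Real.log (ν k * Real.exp ((ψ k - c x (y k)) / ε)) ≤
          Real.log (∑ j, ν j * Real.exp ((ψ j - c x (y j)) / ε)) :=
        Real.log_le_log (mul_pos (hν k) (Real.exp_pos _)) hterm
      rw [Real.log_mul (hν k).ne' (Real.exp_pos _).ne', Real.log_exp] at hlog
      have h2 := mul_le_mul_of_nonneg_left hlog hε.le
      rw [mul_add, mul_div_cancel₀ _ hε.ne'] at h2
      have h3 : ε * Real.log νmin ≤ ε * Real.log (ν k) :=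
        mul_le_mul_of_nonneg_left (Real.log_le_log hνminpos (hνminle k)) hε.le
      have h4 := hBge x hx k
      simp only [hf]
      linarith
    have hint : ψ k - B + ε * Real.log νmin ≤ ∫ x in Ω, f x ∂μ := by
      have h5 := setIntegral_ge_of_const_le (μ := μ) hΩc.measurableSet
        (by rw [hμΩ]; exact ENNReal.one_ne_top) hpt hfint
      rw [measureReal_def, hμΩ] at h5
      simpa using h5
    have hz : (∑ j, ψ j * ν j) = 0 := by
      rw [← hψ]; exact Finset.sum_congr rfl fun j _ => mul_comm _ _
    unfold Jdual
    rw [hz]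
    simp only [hf] at hint
    linarith
  refine ⟨fun ψ hψ => main (fun j => ψ j) hψ, ?_⟩
  intro ψ hψ0 hlim
  have hcoeffpos : 0 < νmin / (1 - νmin) := div_pos hνminpos h1ν
  have hsq : 0 < Real.sqrt N := Real.sqrt_pos.mpr (by exact_mod_cast hNpos)
  have hnorm : ∀ n, ‖ψ n‖ / Real.sqrt N ≤ ⨆ j, |ψ n j| := by
    intro n
    set M := ⨆ j, |ψ n j| with hM
    have hjle : ∀ j, |ψ n j| ≤ M := fun j => le_ciSup (f := fun j => |ψ n j|) (Set.finite_range _).bddAbove j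
    have hM0 : 0 ≤ M := le_trans (abs_nonneg _) (hjle ⟨0, hNpos⟩)
    rw [div_le_iff₀ hsq]
    have h6 : ‖ψ n‖ ≤ Real.sqrt (N * M ^ 2) := by
      rw [EuclideanSpace.norm_eq]
      apply Real.sqrt_le_sqrt
      calc (∑ j, ‖ψ n j‖ ^ 2) ≤ ∑ _j : Fin N, M ^ 2 := by
            apply Finset.sum_le_sum
            intro j _
            rw [Real.norm_eq_abs]
            exact pow_le_pow_left₀ (abs_nonneg _) (hjle j) 2
        _ = N * M ^ 2 := by simp [Finset.sum_const, mul_comm]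
    calc ‖ψ n‖ ≤ Real.sqrt (N * M ^ 2) := h6
      _ = Real.sqrt N * M := by
          rw [Real.sqrt_mul (Nat.cast_nonneg N), Real.sqrt_sq hM0]
      _ = M * Real.sqrt N := mul_comm _ _
  have h7 : Filter.Tendsto (fun n => (νmin / (1 - νmin)) * (‖ψ n‖ / Real.sqrt N))
      Filter.atTop Filter.atTop :=
    (hlim.atTop_div_const hsq).const_mul_atTop hcoeffpos
  have h8 : Filter.Tendsto
      (fun n => (νmin / (1 - νmin)) * (‖ψ n‖ / Real.sqrt N) - B + ε * Real.log νmin)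
      Filter.atTop Filter.atTop := by
    simpa [sub_eq_add_neg, add_assoc] using
      Filter.tendsto_atTop_add_const_right Filter.atTop (-B + ε * Real.log νmin) h7
  apply Filter.tendsto_atTop_mono _ h8
  intro n
  have h9 := main (fun j => ψ n j) (hψ0 n)
  have h10 : (νmin / (1 - νmin)) * (‖ψ n‖ / Real.sqrt N) ≤
      (νmin / (1 - νmin)) * (⨆ j, |ψ n j|) :=
    mul_le_mul_of_nonneg_left (hnorm n) hcoeffpos.le
  linarith
end

section
/- The regularized semi-discrete dual functional J_ε is differentiable at every ψ ∈ ℝ^N, and for each k ∈ {1,…,N} its partial derivative is ∂J_ε/∂ψ_k (ψ) = ∫_Ω p_k(x|ψ) dμ(x) − ν_k, where p_k(x|ψ) = ν_k·exp((ψ_k − c(x,y_k))/ε) / ∑_{j=1}^N ν_j·exp((ψ_j − c(x,y_j))/ε) is the entropic plan density. -/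
open MeasureTheory

/-- `J_ε` is differentiable at every `ψ ∈ ℝ^N` with partial derivatives
`∂J_ε/∂ψ_k (ψ) = ∫_Ω p_k(x|ψ) dμ(x) − ν_k`, where
`p_k(x|ψ) = ν_k·exp((ψ_k − c(x,y_k))/ε) / ∑_j ν_j·exp((ψ_j − c(x,y_j))/ε)`. -/
theorem stmt_6 (d N : ℕ) (hN : 1 ≤ N)
    (Ω : Set (EuclideanSpace ℝ (Fin d))) (hΩne : Ω.Nonempty) (hΩc : IsCompact Ω)
    (μ : Measure (EuclideanSpace ℝ (Fin d))) [IsProbabilityMeasure μ] (hμΩ : μ Ω = 1)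
    (y : Fin N → EuclideanSpace ℝ (Fin d))
    (ν : Fin N → ℝ) (hν : ∀ j, 0 < ν j) (hνsum : ∑ j, ν j = 1)
    (c : EuclideanSpace ℝ (Fin d) → EuclideanSpace ℝ (Fin d) → ℝ)
    (hc : Continuous fun p : EuclideanSpace ℝ (Fin d) × EuclideanSpace ℝ (Fin d) => c p.1 p.2)
    (ε : ℝ) (hε : 0 < ε)
    (ψ : Fin N → ℝ) :
    DifferentiableAt ℝ (Jdual d N Ω μ y ν c ε) ψ ∧
    ∀ k : Fin N,
      fderiv ℝ (Jdual d N Ω μ y ν c ε) ψ (Pi.single k 1) =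
        (∫ x in Ω,
          (ν k * Real.exp ((ψ k - c x (y k)) / ε)) /
            (∑ j, ν j * Real.exp ((ψ j - c x (y j)) / ε)) ∂μ) - ν k := by
  classical
  set g : Fin N → EuclideanSpace ℝ (Fin d) → ℝ := fun j x => c x (y j) with hg
  have hgc : ∀ j, Continuous (g j) := fun j =>
    hc.comp (continuous_id.prodMk continuous_const)
  set S : (Fin N → ℝ) → EuclideanSpace ℝ (Fin d) → ℝ :=
    fun φ x => ∑ j, ν j * Real.exp ((φ j - g j x) / ε) with hSdef
  have hSpos : ∀ φ x, 0 < S φ x := fun φ x =>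
    Finset.sum_pos (fun j _ => mul_pos (hν j) (Real.exp_pos _))
      ⟨⟨0, hN⟩, Finset.mem_univ _⟩
  set F' : (Fin N → ℝ) → EuclideanSpace ℝ (Fin d) → (Fin N → ℝ) →L[ℝ] ℝ :=
    fun φ x => ∑ j, (ν j * Real.exp ((φ j - g j x) / ε) / S φ x) •
      (ContinuousLinearMap.proj j : (Fin N → ℝ) →L[ℝ] ℝ) with hF'def
  -- pointwise differentiability
  have hderiv : ∀ (φ : Fin N → ℝ) (x : EuclideanSpace ℝ (Fin d)),
      HasFDerivAt (fun φ' => ε * Real.log (S φ' x)) (F' φ x) φ := by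
    intro φ x
    have hSder : HasFDerivAt (fun φ' => S φ' x)
        (∑ j, (ν j * Real.exp ((φ j - g j x) / ε) / ε) •
          (ContinuousLinearMap.proj j : (Fin N → ℝ) →L[ℝ] ℝ)) φ := by
      apply HasFDerivAt.fun_sum
      intro j _
      have h1 : HasDerivAt (fun t : ℝ => ν j * Real.exp ((t - g j x) / ε))
          (ν j * Real.exp ((φ j - g j x) / ε) / ε) (φ j) := by
        have h0 : HasDerivAt (fun t : ℝ => (t - g j x) / ε) (1 / ε) (φ j) := by
          simpa using ((hasDerivAt_id (φ j)).sub_const (g j x)).div_const ε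
        have := (h0.exp).const_mul (ν j)
        refine this.congr_deriv (Eq.symm ?_)
        ring
      have hproj : HasFDerivAt (fun φ' : Fin N → ℝ => φ' j)
          (ContinuousLinearMap.proj j : (Fin N → ℝ) →L[ℝ] ℝ) φ := by
        exact (ContinuousLinearMap.proj j : (Fin N → ℝ) →L[ℝ] ℝ).hasFDerivAt
      have := h1.comp_hasFDerivAt φ hproj
      exact this
    have hlog : HasFDerivAt (fun φ' => Real.log (S φ' x))
        ((S φ x)⁻¹ • (∑ j, (ν j * Real.exp ((φ j - g j x) / ε) / ε) •
          (ContinuousLinearMap.proj j : (Fin N → ℝ) →L[ℝ] ℝ))) φ :=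
      by have := (Real.hasDerivAt_log (hSpos φ x).ne').comp_hasFDerivAt φ hSder; exact this
    have := hlog.const_mul ε
    refine this.congr_fderiv (Eq.symm ?_)
    rw [hF'def]
    ext v
    simp only [ContinuousLinearMap.smul_apply, ContinuousLinearMap.sum_apply, smul_eq_mul,
      Finset.mul_sum, Finset.sum_apply]
    refine Finset.sum_congr rfl fun j _ => ?_
    field_simp [hε.ne', (hSpos φ x).ne']
  -- the norm bound
  have hbound : ∀ (φ : Fin N → ℝ) (x : EuclideanSpace ℝ (Fin d)), ‖F' φ x‖ ≤ 1 := by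
    intro φ x
    refine ContinuousLinearMap.opNorm_le_bound _ zero_le_one fun v => ?_
    have hterm : ∀ j, 0 ≤ ν j * Real.exp ((φ j - g j x) / ε) / S φ x := fun j =>
      div_nonneg (mul_nonneg (hν j).le (Real.exp_pos _).le) (hSpos φ x).le
    have hsum1 : ∑ j, ν j * Real.exp ((φ j - g j x) / ε) / S φ x = 1 := by
      rw [← Finset.sum_div, div_self (hSpos φ x).ne']
    calc ‖F' φ x v‖ = |∑ j, ν j * Real.exp ((φ j - g j x) / ε) / S φ x * v j| := by
          simp [hF'def, Finset.sum_apply]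
      _ ≤ ∑ j, |ν j * Real.exp ((φ j - g j x) / ε) / S φ x * v j| :=
          Finset.abs_sum_le_sum_abs _ _
      _ ≤ ∑ j, ν j * Real.exp ((φ j - g j x) / ε) / S φ x * ‖v‖ := by
          refine Finset.sum_le_sum fun j _ => ?_
          rw [abs_mul, abs_of_nonneg (hterm j)]
          have hvj : |v j| ≤ ‖v‖ := by simpa using norm_le_pi_norm v j
          exact mul_le_mul_of_nonneg_left hvj (hterm j)
      _ = ‖v‖ := by rw [← Finset.sum_mul, hsum1, one_mul]
      _ = 1 * ‖v‖ := (one_mul _).symm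
  -- continuity in x of F' ψ
  have hF'cont : ∀ φ : Fin N → ℝ, Continuous (fun x => F' φ x) := by
    intro φ
    apply continuous_finset_sum
    intro j _
    exact ((continuous_const.mul ((continuous_const.sub (hgc j)).div_const ε).rexp).div
      (continuous_finset_sum _ fun i _ =>
        continuous_const.mul ((continuous_const.sub (hgc i)).div_const ε).rexp)
      (fun x => (hSpos φ x).ne')).smul continuous_const
  have hFcont : ∀ φ : Fin N → ℝ, Continuous (fun x => ε * Real.log (S φ x)) := by
    intro φ
    exact continuous_const.mul ((continuous_finset_sum _ fun i _ =>
      continuous_const.mul ((continuous_const.sub (hgc i)).div_const ε).rexp).log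
      (fun x => (hSpos φ x).ne'))
  -- differentiate under the integral
  have key : HasFDerivAt (fun φ => ∫ x in Ω, ε * Real.log (S φ x) ∂μ)
      (∫ x in Ω, F' ψ x ∂μ) ψ := by
    apply hasFDerivAt_integral_of_dominated_of_fderiv_le (bound := fun _ => (1 : ℝ))
      (F' := F') (s := Metric.ball ψ 1) (Metric.ball_mem_nhds ψ one_pos)
    · exact Filter.Eventually.of_forall fun φ => (hFcont φ).aestronglyMeasurable
    · exact (hFcont ψ).continuousOn.integrableOn_compact hΩc
    · exact (hF'cont ψ).aestronglyMeasurable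
    · exact Filter.Eventually.of_forall fun x φ _ => hbound φ x
    · exact integrable_const _
    · exact Filter.Eventually.of_forall fun x φ _ => hderiv φ x
  -- linear part
  have hlin : HasFDerivAt (fun φ : Fin N → ℝ => ∑ j, φ j * ν j)
      (∑ j, (ν j) • (ContinuousLinearMap.proj j : (Fin N → ℝ) →L[ℝ] ℝ)) ψ := by
    apply HasFDerivAt.fun_sum
    intro j _
    exact ((ContinuousLinearMap.proj j : (Fin N → ℝ) →L[ℝ] ℝ).hasFDerivAt).mul_const (ν j)
  have htot : HasFDerivAt (Jdual d N Ω μ y ν c ε)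
      ((∫ x in Ω, F' ψ x ∂μ) - ∑ j, (ν j) •
        (ContinuousLinearMap.proj j : (Fin N → ℝ) →L[ℝ] ℝ)) ψ := key.sub hlin
  refine ⟨htot.differentiableAt, fun k => ?_⟩
  rw [htot.fderiv]
  have hintF' : Integrable (fun x => F' ψ x) (μ.restrict Ω) :=
    (hF'cont ψ).continuousOn.integrableOn_compact hΩc
  rw [ContinuousLinearMap.sub_apply, ContinuousLinearMap.integral_apply hintF']
  have h1 : ∀ x, F' ψ x (Pi.single k 1) =
      ν k * Real.exp ((ψ k - g k x) / ε) / S ψ x := by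
    intro x
    simp only [hF'def, ContinuousLinearMap.sum_apply, ContinuousLinearMap.smul_apply,
      ContinuousLinearMap.proj_apply, smul_eq_mul]
    rw [Finset.sum_eq_single k]
    · simp
    · intro j _ hj; simp [Pi.single_eq_of_ne hj]
    · intro h; exact absurd (Finset.mem_univ k) h
  have h2 : (∑ j, (ν j) • (ContinuousLinearMap.proj j : (Fin N → ℝ) →L[ℝ] ℝ))
      (Pi.single k 1) = ν k := by
    simp only [ContinuousLinearMap.sum_apply, ContinuousLinearMap.smul_apply,
      ContinuousLinearMap.proj_apply, smul_eq_mul]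
    rw [Finset.sum_eq_single k]
    · simp
    · intro j _ hj; simp [Pi.single_eq_of_ne hj]
    · intro h; exact absurd (Finset.mem_univ k) h
  rw [h2]
  congr 1
  exact integral_congr_ae (Filter.Eventually.of_forall fun x => h1 x)
end

section
/- Suppose for each n ∈ ℕ one is given finitely many quadrature points x_1^n,…,x_{Q_n}^n ∈ Ω and weights m_1^n,…,m_{Q_n}^n > 0 with ∑_{q=1}^{Q_n} m_q^n = 1, defining the discretized dual functional J_ε^n(ψ) = ∑_{q=1}^{Q_n} m_q^n · ε·log(∑_{j=1}^N ν_j·exp((ψ_j − c(x_q^n,y_j))/ε)) − ∑_{j=1}^N ψ_j ν_j. Assume that J_ε^n(ψ) → J_ε(ψ) as n → ∞ for every ψ ∈ ℝ^N, that J_ε has a unique minimizer ψ* over the hyperplane V = {ψ ∈ ℝ^N : ∑_j ν_j ψ_j = 0}, and that for each n, ψ^n minimizes J_ε^n over V. Then ψ^n → ψ* in ℝ^N as n → ∞. -/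
open MeasureTheory

lemma lse_shift {N : ℕ} (ν : Fin N → ℝ) (hν : ∀ j, 0 < ν j) (hN : N ≠ 0)
    {ε : ℝ} (hε : 0 < ε) (a ψ φ : Fin N → ℝ) {t : ℝ}
    (h : ∀ j, ψ j ≤ φ j + t) :
    ε * Real.log (∑ j, ν j * Real.exp ((ψ j - a j) / ε)) ≤
      ε * Real.log (∑ j, ν j * Real.exp ((φ j - a j) / ε)) + t := by
  haveI : Nonempty (Fin N) := Fin.pos_iff_nonempty.mp (Nat.pos_of_ne_zero hN)
  have hne : (Finset.univ : Finset (Fin N)).Nonempty := Finset.univ_nonempty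
  have hpos : ∀ χ : Fin N → ℝ, 0 < ∑ j, ν j * Real.exp ((χ j - a j) / ε) :=
    fun χ => Finset.sum_pos (fun j _ => mul_pos (hν j) (Real.exp_pos _)) hne
  have hle : (∑ j, ν j * Real.exp ((ψ j - a j) / ε)) ≤
      Real.exp (t / ε) * ∑ j, ν j * Real.exp ((φ j - a j) / ε) := by
    rw [Finset.mul_sum]
    refine Finset.sum_le_sum fun j _ => ?_
    rw [mul_left_comm, ← Real.exp_add]
    refine mul_le_mul_of_nonneg_left (Real.exp_le_exp.mpr ?_) (hν j).le
    rw [← add_div]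
    gcongr
    linarith [h j]
  have hlog := Real.log_le_log (hpos ψ) hle
  rw [Real.log_mul (Real.exp_ne_zero _) (ne_of_gt (hpos φ)), Real.log_exp] at hlog
  have := mul_le_mul_of_nonneg_left hlog hε.le
  rw [mul_add, mul_div_cancel₀ _ (ne_of_gt hε)] at this
  linarith

lemma lse_lower {N : ℕ} (ν : Fin N → ℝ) (hν : ∀ j, 0 < ν j)
    {ε : ℝ} (hε : 0 < ε) (a ψ : Fin N → ℝ) (j : Fin N) :
    ε * Real.log (ν j) + (ψ j - a j) ≤
      ε * Real.log (∑ i, ν i * Real.exp ((ψ i - a i) / ε)) := by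
  have h1 : ν j * Real.exp ((ψ j - a j) / ε) ≤ ∑ i, ν i * Real.exp ((ψ i - a i) / ε) :=
    Finset.single_le_sum (f := fun i => ν i * Real.exp ((ψ i - a i) / ε))
      (fun i _ => (mul_pos (hν i) (Real.exp_pos _)).le) (Finset.mem_univ j)
  have h2 := Real.log_le_log (mul_pos (hν j) (Real.exp_pos _)) h1
  rw [Real.log_mul (ne_of_gt (hν j)) (Real.exp_ne_zero _), Real.log_exp] at h2
  have := mul_le_mul_of_nonneg_left h2 hε.le
  rw [mul_add, mul_div_cancel₀ _ (ne_of_gt hε)] at this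
  linarith


/-- convergence of minimizers of quadrature-discretized dual functionals.
If the discretized dual functionals `J_ε^n` (built from quadrature points in `Ω` with
positive weights summing to 1) converge pointwise to `J_ε`, `J_ε` has a unique minimizer
`ψ*` over the hyperplane `V = {ψ : ∑_j ν_j ψ_j = 0}`, and `ψ^n` minimizes `J_ε^n`
over `V`, then `ψ^n → ψ*`. -/
theorem stmt_8 (d N : ℕ) (hN : 2 ≤ N)
    (Ω : Set (EuclideanSpace ℝ (Fin d))) (hΩne : Ω.Nonempty) (hΩc : IsCompact Ω)
    (μ : Measure (EuclideanSpace ℝ (Fin d))) [IsProbabilityMeasure μ] (hμΩ : μ Ω = 1)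
    (y : Fin N → EuclideanSpace ℝ (Fin d))
    (ν : Fin N → ℝ) (hν : ∀ j, 0 < ν j) (hνsum : ∑ j, ν j = 1)
    (hνlt : (⨅ j, ν j) < 1)
    (c : EuclideanSpace ℝ (Fin d) → EuclideanSpace ℝ (Fin d) → ℝ)
    (hc : Continuous fun p : EuclideanSpace ℝ (Fin d) × EuclideanSpace ℝ (Fin d) => c p.1 p.2)
    (ε : ℝ) (hε : 0 < ε)
    (Q : ℕ → ℕ)
    (xq : (n : ℕ) → Fin (Q n) → EuclideanSpace ℝ (Fin d)) (hxq : ∀ n q, xq n q ∈ Ω)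
    (m : (n : ℕ) → Fin (Q n) → ℝ) (hm : ∀ n q, 0 < m n q) (hmsum : ∀ n, ∑ q, m n q = 1)
    (Jn : ℕ → (Fin N → ℝ) → ℝ)
    (hJn : ∀ n ψ, Jn n ψ =
      (∑ q, m n q *
        (ε * Real.log (∑ j, ν j * Real.exp ((ψ j - c (xq n q) (y j)) / ε))))
        - ∑ j, ψ j * ν j)
    (hconv : ∀ ψ, Filter.Tendsto (fun n => Jn n ψ) Filter.atTop
      (nhds (Jdual d N Ω μ y ν c ε ψ)))
    (V : Set (Fin N → ℝ)) (hV : V = {ψ | ∑ j, ν j * ψ j = 0})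
    (ψstar : Fin N → ℝ) (hstarV : ψstar ∈ V)
    (hstarmin : ∀ ψ ∈ V, Jdual d N Ω μ y ν c ε ψstar ≤ Jdual d N Ω μ y ν c ε ψ)
    (hstaruniq : ∀ φ ∈ V,
      (∀ ψ ∈ V, Jdual d N Ω μ y ν c ε φ ≤ Jdual d N Ω μ y ν c ε ψ) → φ = ψstar)
    (ψn : ℕ → Fin N → ℝ) (hψnV : ∀ n, ψn n ∈ V)
    (hψnmin : ∀ n, ∀ ψ ∈ V, Jn n (ψn n) ≤ Jn n ψ) :
    Filter.Tendsto ψn Filter.atTop (nhds ψstar) := by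
  haveI : Nonempty (Fin N) := ⟨⟨0, by omega⟩⟩
  set J := Jdual d N Ω μ y ν c ε with hJdef
  -- the minimal weight
  set νm : ℝ := ⨅ j, ν j with hνm_def
  obtain ⟨jm, hjm⟩ := Finite.exists_min ν
  have hνm_eq : νm = ν jm := le_antisymm (ciInf_le (Finite.bddBelow_range ν) jm) (le_ciInf hjm)
  have hνm_pos : 0 < νm := hνm_eq ▸ hν jm
  have hνm_le : ∀ j, νm ≤ ν j := fun j => hνm_eq ▸ hjm j
  have hνm_lt1 : νm < 1 := hνlt
  -- a uniform upper bound on the cost over Ω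
  have hMj : ∀ j : Fin N, ∃ Mj : ℝ, ∀ x ∈ Ω, c x (y j) ≤ Mj := by
    intro j
    have hcont : ContinuousOn (fun x => c x (y j)) Ω :=
      (hc.comp (continuous_id.prodMk continuous_const)).continuousOn
    obtain ⟨x0, _, hx0⟩ := hΩc.exists_isMaxOn hΩne hcont
    exact ⟨c x0 (y j), fun x hx => hx0 hx⟩
  choose Mf hMf using hMj
  obtain ⟨jM, hjM⟩ := Finite.exists_max Mf
  set M : ℝ := Mf jM with hM_def
  have hM : ∀ x ∈ Ω, ∀ j, c x (y j) ≤ M := fun x hx j => (hMf j x hx).trans (hjM j)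
  have hVmem : ∀ ψ : Fin N → ℝ, ψ ∈ V ↔ ∑ j, ν j * ψ j = 0 := fun ψ => by rw [hV]; rfl
  have hlin0 : ∀ ψ ∈ V, ∑ j, ψ j * ν j = 0 := by
    intro ψ hψ
    rw [show ∑ j, ψ j * ν j = ∑ j, ν j * ψ j from
      Finset.sum_congr rfl fun j _ => mul_comm _ _]
    exact (hVmem ψ).mp hψ
  -- uniform 2-Lipschitz bound for the discretized functionals
  have key : ∀ n (ψ φ : Fin N → ℝ), Jn n ψ - Jn n φ ≤ 2 * ‖ψ - φ‖ := by
    intro n ψ φ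
    set t := ‖ψ - φ‖ with ht_def
    have ht : ∀ j, |ψ j - φ j| ≤ t := by
      intro j
      simpa [ht_def] using norm_le_pi_norm (ψ - φ) j
    rw [hJn n ψ, hJn n φ]
    have h2 : ∑ q, m n q * (ε * Real.log (∑ j, ν j * Real.exp ((ψ j - c (xq n q) (y j)) / ε)))
        ≤ (∑ q, m n q * (ε * Real.log (∑ j, ν j * Real.exp ((φ j - c (xq n q) (y j)) / ε)))) + t := by
      have := Finset.sum_le_sum (s := Finset.univ) fun (q : Fin (Q n)) _ =>
        mul_le_mul_of_nonneg_left
          (lse_shift ν hν (by omega) hε (fun j => c (xq n q) (y j)) ψ φ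
            (fun j => by linarith [(abs_le.mp (ht j)).2])) (hm n q).le
      calc ∑ q, m n q * (ε * Real.log (∑ j, ν j * Real.exp ((ψ j - c (xq n q) (y j)) / ε)))
          ≤ ∑ q, m n q * ((ε * Real.log (∑ j, ν j * Real.exp ((φ j - c (xq n q) (y j)) / ε))) + t) := this
        _ = (∑ q, m n q * (ε * Real.log (∑ j, ν j * Real.exp ((φ j - c (xq n q) (y j)) / ε)))) + t := by
            simp [mul_add, Finset.sum_add_distrib, ← Finset.sum_mul, hmsum n]
    have h3 : ∑ j, φ j * ν j - ∑ j, ψ j * ν j ≤ t := by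
      rw [← Finset.sum_sub_distrib]
      calc ∑ j, (φ j * ν j - ψ j * ν j) ≤ ∑ j, t * ν j := by
            refine Finset.sum_le_sum fun j _ => ?_
            have h4 := (abs_le.mp (ht j)).1
            nlinarith [hν j]
        _ = t := by rw [← Finset.mul_sum, hνsum, mul_one]
    linarith
  have hlip : ∀ n (ψ φ : Fin N → ℝ), |Jn n ψ - Jn n φ| ≤ 2 * ‖ψ - φ‖ := by
    intro n ψ φ
    rw [abs_sub_le_iff]
    refine ⟨key n ψ φ, ?_⟩
    have := key n φ ψ
    rwa [norm_sub_rev] at this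
  -- uniform coercivity on V
  have hcoer : ∀ n, ∀ ψ ∈ V, νm * ‖ψ‖ + (ε * Real.log νm - M) ≤ Jn n ψ := by
    intro n ψ hψ
    obtain ⟨j0, hj0⟩ := Finite.exists_max ψ
    have hj0nn : 0 ≤ ψ j0 := by
      by_contra hcon
      push_neg at hcon
      have h5 : ∑ j, ν j * ψ j < 0 := by
        calc ∑ j, ν j * ψ j ≤ ∑ j, ν j * ψ j0 :=
            Finset.sum_le_sum fun j _ => mul_le_mul_of_nonneg_left (hj0 j) (hν j).le
          _ = ψ j0 := by rw [← Finset.sum_mul, hνsum, one_mul]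
          _ < 0 := hcon
      rw [(hVmem ψ).mp hψ] at h5
      exact lt_irrefl 0 h5
    have hlow : ∀ j, -(ψ j0) ≤ ν j * ψ j := by
      intro j
      have h1 : ∑ i ∈ Finset.univ.erase j, ν i * ψ i ≤ ψ j0 := by
        calc ∑ i ∈ Finset.univ.erase j, ν i * ψ i
            ≤ ∑ i ∈ Finset.univ.erase j, ν i * ψ j0 :=
              Finset.sum_le_sum fun i _ => mul_le_mul_of_nonneg_left (hj0 i) (hν i).le
          _ = (∑ i ∈ Finset.univ.erase j, ν i) * ψ j0 := (Finset.sum_mul _ _ _).symm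
          _ ≤ 1 * ψ j0 := by
              refine mul_le_mul_of_nonneg_right ?_ hj0nn
              rw [← hνsum]
              exact Finset.sum_le_sum_of_subset_of_nonneg (Finset.erase_subset _ _)
                (fun i _ _ => (hν i).le)
          _ = ψ j0 := one_mul _
      have h2 := Finset.add_sum_erase Finset.univ (fun i => ν i * ψ i) (Finset.mem_univ j)
      have h3 := (hVmem ψ).mp hψ
      linarith
    have hnorm : νm * ‖ψ‖ ≤ ψ j0 := by
      have h1 : ‖ψ‖ ≤ ψ j0 / νm := by
        refine (pi_norm_le_iff_of_nonneg (div_nonneg hj0nn hνm_pos.le)).mpr fun j => ?_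
        rw [Real.norm_eq_abs, abs_le]
        constructor
        · have ha : -(ψ j0) / ν j ≤ ψ j := by
            rw [div_le_iff₀ (hν j)]
            nlinarith [hlow j]
          have hb : -(ψ j0 / νm) ≤ -(ψ j0) / ν j := by
            rw [neg_div, neg_le_neg_iff]
            gcongr
            · exact hνm_le j
          linarith
        · calc ψ j ≤ ψ j0 := hj0 j
            _ ≤ ψ j0 / νm := by
                rw [le_div_iff₀ hνm_pos]
                nlinarith
      calc νm * ‖ψ‖ ≤ νm * (ψ j0 / νm) := mul_le_mul_of_nonneg_left h1 hνm_pos.le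
        _ = ψ j0 := by field_simp
    rw [hJn n ψ, hlin0 ψ hψ, sub_zero]
    have hstep : ∀ q : Fin (Q n),
        ψ j0 + (ε * Real.log νm - M) ≤
          ε * Real.log (∑ j, ν j * Real.exp ((ψ j - c (xq n q) (y j)) / ε)) := by
      intro q
      have h1 := lse_lower ν hν hε (fun j => c (xq n q) (y j)) ψ j0
      have h2 : ε * Real.log νm ≤ ε * Real.log (ν j0) :=
        mul_le_mul_of_nonneg_left (Real.log_le_log hνm_pos (hνm_le j0)) hε.le
      have h3 := hM (xq n q) (hxq n q) j0
      linarith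
    calc νm * ‖ψ‖ + (ε * Real.log νm - M) ≤ ψ j0 + (ε * Real.log νm - M) := by linarith
      _ = ∑ q, m n q * (ψ j0 + (ε * Real.log νm - M)) := by
          rw [← Finset.sum_mul, hmsum n, one_mul]
      _ ≤ ∑ q, m n q * (ε * Real.log (∑ j, ν j * Real.exp ((ψ j - c (xq n q) (y j)) / ε))) :=
          Finset.sum_le_sum fun q _ => mul_le_mul_of_nonneg_left (hstep q) (hm n q).le
  -- uniform bound on the minimizers
  obtain ⟨B, hB⟩ : ∃ B, ∀ n, Jn n ψstar ≤ B := by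
    obtain ⟨B, hB⟩ := (hconv ψstar).bddAbove_range
    exact ⟨B, fun n => hB ⟨n, rfl⟩⟩
  set R := (B - (ε * Real.log νm - M)) / νm with hR_def
  have hR : ∀ n, ‖ψn n‖ ≤ R := by
    intro n
    have h1 := hcoer n (ψn n) (hψnV n)
    have h2 := (hψnmin n ψstar hstarV).trans (hB n)
    rw [hR_def, le_div_iff₀ hνm_pos]
    nlinarith
  -- V is closed
  have hVclosed : IsClosed V := by
    rw [hV]
    exact isClosed_eq (continuous_finset_sum _ fun j _ => continuous_const.mul (continuous_apply j))
      continuous_const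
  -- subsequence argument
  apply Filter.tendsto_of_subseq_tendsto
  intro ns hns
  have hball : ∀ k, ψn (ns k) ∈ Metric.closedBall (0 : Fin N → ℝ) R := fun k => by
    simpa [Metric.mem_closedBall, dist_zero_right] using hR (ns k)
  obtain ⟨φlim, _, ms, hms, hmslim⟩ :=
    tendsto_subseq_of_bounded Metric.isBounded_closedBall hball
  refine ⟨ms, ?_⟩
  have hmslim' : Filter.Tendsto (fun k => ψn (ns (ms k))) Filter.atTop (nhds φlim) := hmslim
  have hφV : φlim ∈ V :=
    hVclosed.mem_of_tendsto hmslim' (Filter.Eventually.of_forall fun k => hψnV _)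
  have hnsms : Filter.Tendsto (fun k => ns (ms k)) Filter.atTop Filter.atTop :=
    hns.comp hms.tendsto_atTop
  have hJlim : Filter.Tendsto (fun k => Jn (ns (ms k)) (ψn (ns (ms k)))) Filter.atTop
      (nhds (J φlim)) := by
    have h1 : Filter.Tendsto (fun k => Jn (ns (ms k)) φlim) Filter.atTop (nhds (J φlim)) :=
      (hconv φlim).comp hnsms
    have h2 : Filter.Tendsto
        (fun k => Jn (ns (ms k)) (ψn (ns (ms k))) - Jn (ns (ms k)) φlim)
        Filter.atTop (nhds 0) := by
      have hnorm0 : Filter.Tendsto (fun k => 2 * ‖ψn (ns (ms k)) - φlim‖) Filter.atTop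
          (nhds 0) := by
        have := (tendsto_iff_norm_sub_tendsto_zero.mp hmslim').const_mul (2 : ℝ)
        simpa using this
      exact squeeze_zero_norm (fun k => hlip (ns (ms k)) _ φlim) hnorm0
    have := h2.add h1
    simpa using this
  have hφmin : ∀ ψ ∈ V, J φlim ≤ J ψ := by
    intro ψ hψ
    exact le_of_tendsto_of_tendsto' hJlim ((hconv ψ).comp hnsms)
      (fun k => hψnmin (ns (ms k)) ψ hψ)
  have hfin := hstaruniq φlim hφV hφmin
  rw [← hfin]
  exact hmslim'
end

section
/- Fix ψ ∈ ℝ^N and a cutoff C ∈ ℝ such that for every x ∈ Ω the index set I_C(x) = {j : c(x,y_j) < C} is nonempty. Then the truncation error satisfies 0 ≤ J_ε(ψ) − J̃_ε(ψ;C) ≤ ε·exp((M − C)/ε)·D(ψ,C), where M = max_{1≤j≤N} ψ_j and D(ψ,C) = ∫_Ω S_trunc(x,ψ;C)^{-1} dμ(x). -/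
open MeasureTheory

/-- The truncated Gibbs sum `S_trunc(x,ψ;C) = ∑_{j : c(x,y_j) < C} ν_j·exp((ψ_j − c(x,y_j))/ε)`. -/
noncomputable def Strunc (d N : ℕ)
    (y : Fin N → EuclideanSpace ℝ (Fin d)) (ν : Fin N → ℝ)
    (c : EuclideanSpace ℝ (Fin d) → EuclideanSpace ℝ (Fin d) → ℝ) (ε C : ℝ)
    (ψ : Fin N → ℝ) (x : EuclideanSpace ℝ (Fin d)) : ℝ :=
  ∑ j ∈ Finset.univ.filter (fun j => c x (y j) < C),
    ν j * Real.exp ((ψ j - c x (y j)) / ε)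

/-- The truncated dual functional `J̃_ε(ψ;C) = ∫_Ω ε·log S_trunc(x,ψ;C) dμ − ∑_j ψ_j ν_j`. -/
noncomputable def Jtrunc (d N : ℕ) (Ω : Set (EuclideanSpace ℝ (Fin d)))
    (μ : Measure (EuclideanSpace ℝ (Fin d)))
    (y : Fin N → EuclideanSpace ℝ (Fin d)) (ν : Fin N → ℝ)
    (c : EuclideanSpace ℝ (Fin d) → EuclideanSpace ℝ (Fin d) → ℝ) (ε C : ℝ)
    (ψ : Fin N → ℝ) : ℝ :=
  (∫ x in Ω, ε * Real.log (Strunc d N y ν c ε C ψ x) ∂μ) - ∑ j, ψ j * ν j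

/-- if for every `x ∈ Ω` the index set `I_C(x)` is nonempty, then
`0 ≤ J_ε(ψ) − J̃_ε(ψ;C) ≤ ε·exp((M − C)/ε)·D(ψ,C)`, where `M = max_j ψ_j` and
`D(ψ,C) = ∫_Ω S_trunc(x,ψ;C)⁻¹ dμ(x)`. -/
theorem stmt_12 (d N : ℕ) (hN : 1 ≤ N)
    (Ω : Set (EuclideanSpace ℝ (Fin d))) (hΩne : Ω.Nonempty) (hΩc : IsCompact Ω)
    (μ : Measure (EuclideanSpace ℝ (Fin d))) [IsProbabilityMeasure μ] (hμΩ : μ Ω = 1)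
    (y : Fin N → EuclideanSpace ℝ (Fin d))
    (ν : Fin N → ℝ) (hν : ∀ j, 0 < ν j) (hνsum : ∑ j, ν j = 1)
    (c : EuclideanSpace ℝ (Fin d) → EuclideanSpace ℝ (Fin d) → ℝ)
    (hc : Continuous fun p : EuclideanSpace ℝ (Fin d) × EuclideanSpace ℝ (Fin d) => c p.1 p.2)
    (ε : ℝ) (hε : 0 < ε)
    (ψ : Fin N → ℝ) (C : ℝ) (hIC : ∀ x ∈ Ω, ∃ j, c x (y j) < C) :
    0 ≤ Jdual d N Ω μ y ν c ε ψ - Jtrunc d N Ω μ y ν c ε C ψ ∧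
    Jdual d N Ω μ y ν c ε ψ - Jtrunc d N Ω μ y ν c ε C ψ ≤
      ε * Real.exp (((⨆ j, ψ j) - C) / ε) *
        (∫ x in Ω, (Strunc d N y ν c ε C ψ x)⁻¹ ∂μ) := by
  classical
  haveI : NeZero N := ⟨by omega⟩
  have hΩm : MeasurableSet Ω := hΩc.isClosed.measurableSet
  set M := ⨆ j, ψ j with hMdef
  have hMle : ∀ j, ψ j ≤ M := fun j =>
    le_ciSup (Set.Finite.bddAbove (Set.finite_range ψ)) j
  set S : EuclideanSpace ℝ (Fin d) → ℝ :=
    fun x => ∑ j, ν j * Real.exp ((ψ j - c x (y j)) / ε) with hSdef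
  set T : EuclideanSpace ℝ (Fin d) → ℝ := fun x => Strunc d N y ν c ε C ψ x with hTdef
  -- continuity of each x ↦ c x (y j)
  have hcj : ∀ j, Continuous fun x => c x (y j) := fun j =>
    hc.comp (continuous_id.prodMk continuous_const)
  -- uniform bound on |c x (y j)| over Ω
  obtain ⟨B, hB⟩ : ∃ B, ∀ x ∈ Ω, ∀ j, |c x (y j)| ≤ B := by
    obtain ⟨B, hB⟩ := hΩc.exists_bound_of_continuousOn
      (f := fun x => fun j : Fin N => c x (y j))
      ((continuous_pi fun j => hcj j).continuousOn)
    exact ⟨B, fun x hx j => (norm_le_pi_norm _ j).trans (hB x hx)⟩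
  -- uniform positive lower bound for T on Ω
  set t0 : ℝ := Finset.univ.inf' Finset.univ_nonempty
      (fun j => ν j * Real.exp ((ψ j - C) / ε)) with ht0def
  have ht0pos : 0 < t0 := by
    rw [ht0def]
    apply Finset.lt_inf'_iff .. |>.mpr
    intro j _
    exact mul_pos (hν j) (Real.exp_pos _)
  have hterm_nonneg : ∀ (x : EuclideanSpace ℝ (Fin d)) j,
      0 ≤ ν j * Real.exp ((ψ j - c x (y j)) / ε) := fun x j =>
    le_of_lt (mul_pos (hν j) (Real.exp_pos _))
  have hTlb : ∀ x ∈ Ω, t0 ≤ T x := by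
    intro x hx
    obtain ⟨j, hj⟩ := hIC x hx
    have hjmem : j ∈ Finset.univ.filter (fun j => c x (y j) < C) := by
      simp [hj]
    calc t0 ≤ ν j * Real.exp ((ψ j - C) / ε) :=
          Finset.inf'_le _ (Finset.mem_univ j)
      _ ≤ ν j * Real.exp ((ψ j - c x (y j)) / ε) := by
          apply mul_le_mul_of_nonneg_left _ (hν j).le
          exact Real.exp_le_exp.mpr (by
            apply div_le_div_of_nonneg_right _ hε.le <;> linarith [hj.le])
      _ ≤ T x := Finset.single_le_sum (fun i _ => hterm_nonneg x i) hjmem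
  have hTpos : ∀ x ∈ Ω, 0 < T x := fun x hx => lt_of_lt_of_le ht0pos (hTlb x hx)
  have hTS : ∀ x, T x ≤ S x := by
    intro x
    apply Finset.sum_le_sum_of_subset_of_nonneg (Finset.filter_subset _ _)
    intro i _ _
    exact hterm_nonneg x i
  have hSpos : ∀ x ∈ Ω, 0 < S x := fun x hx => lt_of_lt_of_le (hTpos x hx) (hTS x)
  -- S - T ≤ exp((M - C)/ε)
  have hRem : ∀ x, S x - T x ≤ Real.exp ((M - C) / ε) := by
    intro x
    have hsplit := Finset.sum_filter_add_sum_filter_not Finset.univ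
      (fun j => c x (y j) < C) (fun j => ν j * Real.exp ((ψ j - c x (y j)) / ε))
    have : S x - T x = ∑ j ∈ Finset.univ.filter (fun j => ¬ c x (y j) < C),
        ν j * Real.exp ((ψ j - c x (y j)) / ε) := by
      rw [hSdef]; simp only [hTdef, Strunc]; linarith [hsplit]
    rw [this]
    calc ∑ j ∈ Finset.univ.filter (fun j => ¬ c x (y j) < C),
          ν j * Real.exp ((ψ j - c x (y j)) / ε)
        ≤ ∑ j ∈ Finset.univ.filter (fun j => ¬ c x (y j) < C),
          ν j * Real.exp ((M - C) / ε) := by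
          apply Finset.sum_le_sum
          intro j hj
          rw [Finset.mem_filter] at hj
          have hjC : C ≤ c x (y j) := not_lt.mp hj.2
          apply mul_le_mul_of_nonneg_left _ (hν j).le
          exact Real.exp_le_exp.mpr (div_le_div_of_nonneg_right
            (by linarith [hMle j]) hε.le)
      _ ≤ ∑ j, ν j * Real.exp ((M - C) / ε) := by
          apply Finset.sum_le_sum_of_subset_of_nonneg (Finset.filter_subset _ _)
          intro i _ _
          exact le_of_lt (mul_pos (hν i) (Real.exp_pos _))
      _ = Real.exp ((M - C) / ε) := by rw [← Finset.sum_mul, hνsum, one_mul]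
  -- uniform upper bound for S on Ω
  set s1 : ℝ := ∑ j, ν j * Real.exp ((ψ j + B) / ε) with hs1def
  have hSub : ∀ x ∈ Ω, S x ≤ s1 := by
    intro x hx
    apply Finset.sum_le_sum
    intro j _
    apply mul_le_mul_of_nonneg_left _ (hν j).le
    apply Real.exp_le_exp.mpr
    apply div_le_div_of_nonneg_right _ hε.le
    have := abs_le.mp (hB x hx j)
    linarith [this.1]
  have hs1pos : 0 < s1 := lt_of_lt_of_le ht0pos ((hTlb _ hΩne.choose_spec).trans
    ((hTS _).trans (hSub _ hΩne.choose_spec)))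
  -- measurability
  have hSmeas : Measurable S := by
    apply Finset.measurable_sum
    intro j _
    exact (measurable_const.mul ((Real.continuous_exp.comp
      ((continuous_const.sub (hcj j)).div_const ε)).measurable))
  have hTmeas : Measurable T := by
    have : T = fun x => ∑ j, if c x (y j) < C then
        ν j * Real.exp ((ψ j - c x (y j)) / ε) else 0 := by
      funext x
      simp [hTdef, Strunc, Finset.sum_filter]
    rw [this]
    apply Finset.measurable_sum
    intro j _
    apply Measurable.ite (measurableSet_lt (hcj j).measurable measurable_const)
    · exact (measurable_const.mul ((Real.continuous_exp.comp
        ((continuous_const.sub (hcj j)).div_const ε)).measurable))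
    · exact measurable_const
  -- integrability of the three integrands
  have hlog_bd : ∀ r : ℝ, t0 ≤ r → r ≤ s1 → |Real.log r| ≤ |Real.log t0| ⊔ |Real.log s1| := by
    intro r h1 h2
    exact abs_le_max_abs_abs (Real.log_le_log ht0pos h1) (Real.log_le_log
      (lt_of_lt_of_le ht0pos h1) h2)
  have haebd : ∀ (f : EuclideanSpace ℝ (Fin d) → ℝ) (K : ℝ),
      (∀ x ∈ Ω, ‖f x‖ ≤ K) → ∀ᵐ x ∂(μ.restrict Ω), ‖f x‖ ≤ K := by
    intro f K h
    rw [ae_restrict_iff' hΩm]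
    exact Filter.Eventually.of_forall h
  have hμfin : IsFiniteMeasure (μ.restrict Ω) := by
    constructor
    rw [Measure.restrict_apply_univ, hμΩ]
    exact ENNReal.one_lt_top
  have hintS : IntegrableOn (fun x => ε * Real.log (S x)) Ω μ := by
    apply Integrable.mono' (integrable_const (ε * (|Real.log t0| ⊔ |Real.log s1|)))
      ((Real.measurable_log.comp hSmeas).const_mul ε).aestronglyMeasurable.restrict
    apply haebd
    intro x hx
    rw [norm_mul, Real.norm_eq_abs, Real.norm_eq_abs, abs_of_pos hε]
    exact mul_le_mul_of_nonneg_left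
      (hlog_bd _ ((hTlb x hx).trans (hTS x)) (hSub x hx)) hε.le
  have hintT : IntegrableOn (fun x => ε * Real.log (T x)) Ω μ := by
    apply Integrable.mono' (integrable_const (ε * (|Real.log t0| ⊔ |Real.log s1|)))
      ((Real.measurable_log.comp hTmeas).const_mul ε).aestronglyMeasurable.restrict
    apply haebd
    intro x hx
    rw [norm_mul, Real.norm_eq_abs, Real.norm_eq_abs, abs_of_pos hε]
    exact mul_le_mul_of_nonneg_left
      (hlog_bd _ (hTlb x hx) ((hTS x).trans (hSub x hx))) hε.le
  have hintInv : IntegrableOn (fun x => (T x)⁻¹) Ω μ := by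
    apply Integrable.mono' (integrable_const t0⁻¹)
      hTmeas.inv.aestronglyMeasurable.restrict
    apply haebd
    intro x hx
    rw [Real.norm_eq_abs, Pi.inv_apply, abs_of_pos (inv_pos.mpr (hTpos x hx))]
    exact inv_anti₀ ht0pos (hTlb x hx)
  have hintBnd : IntegrableOn
      (fun x => ε * Real.exp ((M - C) / ε) * (T x)⁻¹) Ω μ :=
    (hintInv.const_mul _)
  -- difference of functionals
  have hdiff : Jdual d N Ω μ y ν c ε ψ - Jtrunc d N Ω μ y ν c ε C ψ =
      ∫ x in Ω, (ε * Real.log (S x) - ε * Real.log (T x)) ∂μ := by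
    have e1 : (∫ x in Ω, ε * Real.log (∑ j, ν j * Real.exp ((ψ j - c x (y j)) / ε)) ∂μ)
        = ∫ x in Ω, ε * Real.log (S x) ∂μ := rfl
    have e2 : (∫ x in Ω, ε * Real.log (Strunc d N y ν c ε C ψ x) ∂μ)
        = ∫ x in Ω, ε * Real.log (T x) ∂μ := rfl
    rw [integral_sub hintS hintT]
    simp only [Jdual, Jtrunc, e1, e2]
    ring
  -- pointwise bounds of the integrand
  have hpt0 : ∀ x ∈ Ω, 0 ≤ ε * Real.log (S x) - ε * Real.log (T x) := by
    intro x hx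
    have := Real.log_le_log (hTpos x hx) (hTS x)
    nlinarith
  have hpt1 : ∀ x ∈ Ω, ε * Real.log (S x) - ε * Real.log (T x) ≤
      ε * Real.exp ((M - C) / ε) * (T x)⁻¹ := by
    intro x hx
    have hT := hTpos x hx
    have hS := hSpos x hx
    have hlog : Real.log (S x) - Real.log (T x) ≤ (S x - T x) / T x := by
      rw [← Real.log_div hS.ne' hT.ne']
      have := Real.log_le_sub_one_of_pos (div_pos hS hT)
      have heq : S x / T x - 1 = (S x - T x) / T x := by
        field_simp
      linarith
    have hb : (S x - T x) / T x ≤ Real.exp ((M - C) / ε) * (T x)⁻¹ := by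
      rw [div_eq_mul_inv]
      exact mul_le_mul_of_nonneg_right (hRem x) (inv_pos.mpr hT).le
    calc ε * Real.log (S x) - ε * Real.log (T x)
        = ε * (Real.log (S x) - Real.log (T x)) := by ring
      _ ≤ ε * ((S x - T x) / T x) := mul_le_mul_of_nonneg_left hlog hε.le
      _ ≤ ε * (Real.exp ((M - C) / ε) * (T x)⁻¹) :=
          mul_le_mul_of_nonneg_left hb hε.le
      _ = ε * Real.exp ((M - C) / ε) * (T x)⁻¹ := by ring
  constructor
  · rw [hdiff]
    exact setIntegral_nonneg hΩm hpt0
  · rw [hdiff]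
    calc ∫ x in Ω, (ε * Real.log (S x) - ε * Real.log (T x)) ∂μ
        ≤ ∫ x in Ω, ε * Real.exp ((M - C) / ε) * (T x)⁻¹ ∂μ :=
          setIntegral_mono_on (hintS.sub hintT) hintBnd hΩm hpt1
      _ = ε * Real.exp ((M - C) / ε) * ∫ x in Ω, (T x)⁻¹ ∂μ := by
          rw [integral_const_mul]
end

section
/- Fix ψ ∈ ℝ^N with J_ε(ψ) ≠ 0, a tolerance τ > 0, and a cutoff C ∈ ℝ such that for every x ∈ Ω the index set I_C(x) = {j : c(x,y_j) < C} is nonempty. If C ≥ M + ε·log( ε·D(ψ,C) / (τ·|J_ε(ψ)|) ), where M = max_{1≤j≤N} ψ_j and D(ψ,C) = ∫_Ω S_trunc(x,ψ;C)^{-1} dμ(x), then the relative truncation error is controlled: |J_ε(ψ) − J̃_ε(ψ;C)| ≤ τ·|J_ε(ψ)|. -/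
open MeasureTheory

/-- integrated truncation bound. If `J_ε(ψ) ≠ 0`, `τ > 0`, every
`I_C(x)` (`x ∈ Ω`) is nonempty, and `C ≥ M + ε·log(ε·D(ψ,C)/(τ·|J_ε(ψ)|))` with
`M = max_j ψ_j` and `D(ψ,C) = ∫_Ω S_trunc(x,ψ;C)⁻¹ dμ(x)`, then
`|J_ε(ψ) − J̃_ε(ψ;C)| ≤ τ·|J_ε(ψ)|`. -/
theorem stmt_13 (d N : ℕ) (hN : 1 ≤ N)
    (Ω : Set (EuclideanSpace ℝ (Fin d))) (hΩne : Ω.Nonempty) (hΩc : IsCompact Ω)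
    (μ : Measure (EuclideanSpace ℝ (Fin d))) [IsProbabilityMeasure μ] (hμΩ : μ Ω = 1)
    (y : Fin N → EuclideanSpace ℝ (Fin d))
    (ν : Fin N → ℝ) (hν : ∀ j, 0 < ν j) (hνsum : ∑ j, ν j = 1)
    (c : EuclideanSpace ℝ (Fin d) → EuclideanSpace ℝ (Fin d) → ℝ)
    (hc : Continuous fun p : EuclideanSpace ℝ (Fin d) × EuclideanSpace ℝ (Fin d) => c p.1 p.2)
    (ε : ℝ) (hε : 0 < ε)
    (ψ : Fin N → ℝ) (hJne : Jdual d N Ω μ y ν c ε ψ ≠ 0)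
    (τ : ℝ) (hτ : 0 < τ)
    (C : ℝ) (hIC : ∀ x ∈ Ω, ∃ j, c x (y j) < C)
    (hC : (⨆ j, ψ j) + ε * Real.log
        (ε * (∫ x in Ω, (Strunc d N y ν c ε C ψ x)⁻¹ ∂μ) /
          (τ * |Jdual d N Ω μ y ν c ε ψ|)) ≤ C) :
    |Jdual d N Ω μ y ν c ε ψ - Jtrunc d N Ω μ y ν c ε C ψ| ≤
      τ * |Jdual d N Ω μ y ν c ε ψ| := by
  classical
  haveI hFinNe : Nonempty (Fin N) := Fin.pos_iff_nonempty.mp (by omega)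
  have hΩm : MeasurableSet Ω := hΩc.measurableSet
  set J := Jdual d N Ω μ y ν c ε ψ with hJdef
  set M := ⨆ j, ψ j with hMdef
  set G := Strunc d N y ν c ε C ψ with hGdef
  set F : EuclideanSpace ℝ (Fin d) → ℝ :=
    fun x => ∑ j, ν j * Real.exp ((ψ j - c x (y j)) / ε) with hFdef
  set D := ∫ x in Ω, (G x)⁻¹ ∂μ with hDdef
  have hcj : ∀ j, Continuous fun x => c x (y j) := fun j =>
    hc.comp (continuous_id.prodMk continuous_const)
  obtain ⟨K, hK⟩ : ∃ K, ∀ x ∈ Ω, ∀ j, |c x (y j)| ≤ K := by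
    have h := fun j => (hΩc.exists_bound_of_continuousOn (hcj j).continuousOn)
    choose Kf hKf using h
    refine ⟨Finset.univ.sup' Finset.univ_nonempty Kf, fun x hx j => ?_⟩
    exact le_trans (hKf j x hx) (Finset.le_sup' _ (Finset.mem_univ j))
  have hψM : ∀ j, ψ j ≤ M := fun j => le_ciSup (Set.Finite.bddAbove (Set.finite_range ψ)) j
  set b := Finset.univ.inf' Finset.univ_nonempty ψ with hbdef
  have hbψ : ∀ j, b ≤ ψ j := fun j => Finset.inf'_le _ (Finset.mem_univ j)
  set a := Finset.univ.inf' Finset.univ_nonempty ν with hadef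
  have haν : ∀ j, a ≤ ν j := fun j => Finset.inf'_le _ (Finset.mem_univ j)
  have ha : 0 < a := by
    rw [hadef, Finset.lt_inf'_iff]
    exact fun j _ => hν j
  set s₀ := a * Real.exp ((b - K) / ε) with hs₀def
  have hs₀ : 0 < s₀ := by positivity
  set s₁ := Real.exp ((M + K) / ε) with hs₁def
  have hs₁ : 0 < s₁ := Real.exp_pos _
  have hGif : ∀ x, G x = ∑ j, if c x (y j) < C then ν j * Real.exp ((ψ j - c x (y j)) / ε) else 0 :=
    fun x => Finset.sum_filter _ _
  have hGF : ∀ x, G x ≤ F x := by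
    intro x
    apply Finset.sum_le_sum_of_subset_of_nonneg (Finset.filter_subset _ _)
    intro j _ _
    exact mul_nonneg (hν j).le (Real.exp_pos _).le
  have hGpos : ∀ x ∈ Ω, s₀ ≤ G x := by
    intro x hx
    obtain ⟨j₀, hj₀⟩ := hIC x hx
    have hcK : c x (y j₀) ≤ K := (abs_le.mp (hK x hx j₀)).2
    have h1 : s₀ ≤ ν j₀ * Real.exp ((ψ j₀ - c x (y j₀)) / ε) := by
      have hexp : Real.exp ((b - K) / ε) ≤ Real.exp ((ψ j₀ - c x (y j₀)) / ε) := by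
        apply Real.exp_le_exp.mpr
        apply div_le_div_of_nonneg_right ?_ hε.le
        linarith [hbψ j₀]
      exact mul_le_mul (haν j₀) hexp (le_of_lt (Real.exp_pos _)) (le_of_lt (hν j₀))
    refine le_trans h1 ?_
    apply Finset.single_le_sum (f := fun j => ν j * Real.exp ((ψ j - c x (y j)) / ε))
      (fun j _ => mul_nonneg (hν j).le (Real.exp_pos _).le)
    simp [hj₀]
  have hFs₁ : ∀ x ∈ Ω, F x ≤ s₁ := by
    intro x hx
    calc F x ≤ ∑ j, ν j * s₁ := by
          apply Finset.sum_le_sum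
          intro j _
          apply mul_le_mul_of_nonneg_left ?_ (le_of_lt (hν j))
          apply Real.exp_le_exp.mpr
          apply div_le_div_of_nonneg_right ?_ hε.le
          have := (abs_le.mp (hK x hx j)).1
          linarith [hψM j]
      _ = s₁ := by rw [← Finset.sum_mul, hνsum, one_mul]
  have hGs₁ : ∀ x ∈ Ω, G x ≤ s₁ := fun x hx => (hGF x).trans (hFs₁ x hx)
  have hGx0 : ∀ x ∈ Ω, 0 < G x := fun x hx => lt_of_lt_of_le hs₀ (hGpos x hx)
  have hFx0 : ∀ x ∈ Ω, 0 < F x := fun x hx => lt_of_lt_of_le (hGx0 x hx) (hGF x)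
  have hFc : Continuous F := by
    apply continuous_finset_sum
    intro j _
    exact continuous_const.mul (Real.continuous_exp.comp ((continuous_const.sub (hcj j)).div_const ε))
  have hGm : Measurable G := by
    have hG' : G = fun x => ∑ j, if c x (y j) < C then ν j * Real.exp ((ψ j - c x (y j)) / ε) else 0 :=
      funext hGif
    rw [hG']
    apply Finset.measurable_sum
    intro j _
    exact Measurable.ite (measurableSet_lt (hcj j).measurable measurable_const)
      (continuous_const.mul (Real.continuous_exp.comp
        ((continuous_const.sub (hcj j)).div_const ε))).measurable measurable_const
  have hae : ∀ᵐ x ∂(μ.restrict Ω), x ∈ Ω := ae_restrict_mem hΩm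
  have hBnd : ∀ (u : ℝ), s₀ ≤ u → u ≤ s₁ → |ε * Real.log u| ≤ ε * (|Real.log s₀| + |Real.log s₁|) := by
    intro u h0 h1
    have hu : 0 < u := lt_of_lt_of_le hs₀ h0
    have l0 : Real.log s₀ ≤ Real.log u := Real.log_le_log hs₀ h0
    have l1 : Real.log u ≤ Real.log s₁ := Real.log_le_log hu h1
    rw [abs_mul, abs_of_pos hε]
    apply mul_le_mul_of_nonneg_left ?_ (le_of_lt hε)
    rw [abs_le]
    constructor
    · have h2 := neg_abs_le (Real.log s₀)
      have h3 := abs_nonneg (Real.log s₁)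
      linarith
    · have h2 := le_abs_self (Real.log s₁)
      have h3 := abs_nonneg (Real.log s₀)
      linarith
  have hfi : IntegrableOn (fun x => ε * Real.log (F x)) Ω μ := by
    apply Integrable.mono' (integrable_const (ε * (|Real.log s₀| + |Real.log s₁|)))
    · exact ((Real.measurable_log.comp hFc.measurable).const_mul ε).aestronglyMeasurable
    · filter_upwards [hae] with x hx
      exact hBnd _ (le_trans (hGpos x hx) (hGF x)) (hFs₁ x hx)
  have hgi : IntegrableOn (fun x => ε * Real.log (G x)) Ω μ := by
    apply Integrable.mono' (integrable_const (ε * (|Real.log s₀| + |Real.log s₁|)))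
    · exact ((Real.measurable_log.comp hGm).const_mul ε).aestronglyMeasurable
    · filter_upwards [hae] with x hx
      exact hBnd _ (hGpos x hx) (hGs₁ x hx)
  have hinv : IntegrableOn (fun x => (G x)⁻¹) Ω μ := by
    apply Integrable.mono' (integrable_const s₀⁻¹)
    · exact hGm.inv.aestronglyMeasurable
    · filter_upwards [hae] with x hx
      rw [Real.norm_eq_abs, abs_of_pos (inv_pos.mpr (hGx0 x hx))]
      exact inv_anti₀ hs₀ (hGpos x hx)
  -- D is positive
  have hDpos : 0 < D := by
    have h1 : s₁⁻¹ ≤ D := by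
      have := setIntegral_mono_on (integrable_const s₁⁻¹) hinv hΩm
        (fun x hx => inv_anti₀ (hGx0 x hx) (hGs₁ x hx))
      rwa [setIntegral_const, measureReal_def, hμΩ, ENNReal.toReal_one, one_smul] at this
    exact lt_of_lt_of_le (inv_pos.mpr hs₁) h1
  -- the difference of functionals
  have hsplit : J - Jtrunc d N Ω μ y ν c ε C ψ =
      ∫ x in Ω, (ε * Real.log (F x) - ε * Real.log (G x)) ∂μ := by
    rw [integral_sub hfi hgi, hJdef]
    simp only [Jdual, Jtrunc]
    ring
  -- nonnegativity of the integrand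
  have hnn : 0 ≤ ∫ x in Ω, (ε * Real.log (F x) - ε * Real.log (G x)) ∂μ := by
    apply setIntegral_nonneg hΩm
    intro x hx
    have := Real.log_le_log (hGx0 x hx) (hGF x)
    nlinarith
  -- integrand upper bound
  have hhi : IntegrableOn (fun x => ε * Real.exp ((M - C) / ε) * (G x)⁻¹) Ω μ :=
    hinv.const_mul _
  have hup : (∫ x in Ω, (ε * Real.log (F x) - ε * Real.log (G x)) ∂μ)
      ≤ ε * Real.exp ((M - C) / ε) * D := by
    have h1 : (∫ x in Ω, (ε * Real.log (F x) - ε * Real.log (G x)) ∂μ)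
        ≤ ∫ x in Ω, ε * Real.exp ((M - C) / ε) * (G x)⁻¹ ∂μ := by
      apply setIntegral_mono_on (hfi.sub hgi) hhi hΩm
      intro x hx
      have hG0 := hGx0 x hx
      have hF0 := hFx0 x hx
      have hlog : Real.log (F x) - Real.log (G x) ≤ (F x - G x) / G x := by
        rw [← Real.log_div (ne_of_gt hF0) (ne_of_gt hG0)]
        have h := Real.log_le_sub_one_of_pos (div_pos hF0 hG0)
        have : F x / G x - 1 = (F x - G x) / G x := by field_simp
        linarith
      have hFG : F x - G x ≤ Real.exp ((M - C) / ε) := by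
        have hsum := Finset.sum_filter_add_sum_filter_not Finset.univ
          (fun j => c x (y j) < C) (fun j => ν j * Real.exp ((ψ j - c x (y j)) / ε))
        have heq : F x - G x = ∑ j ∈ Finset.univ.filter (fun j => ¬ c x (y j) < C),
            ν j * Real.exp ((ψ j - c x (y j)) / ε) := by
          rw [hFdef, hGdef]
          simp only [Strunc]
          linarith [hsum]
        rw [heq]
        calc (∑ j ∈ Finset.univ.filter (fun j => ¬ c x (y j) < C),
              ν j * Real.exp ((ψ j - c x (y j)) / ε))
            ≤ ∑ j ∈ Finset.univ.filter (fun j => ¬ c x (y j) < C),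
              ν j * Real.exp ((M - C) / ε) := by
              apply Finset.sum_le_sum
              intro j hj
              have hjC : C ≤ c x (y j) := not_lt.mp (Finset.mem_filter.mp hj).2
              apply mul_le_mul_of_nonneg_left ?_ (le_of_lt (hν j))
              apply Real.exp_le_exp.mpr
              apply div_le_div_of_nonneg_right ?_ hε.le
              linarith [hψM j]
          _ = (∑ j ∈ Finset.univ.filter (fun j => ¬ c x (y j) < C), ν j)
                * Real.exp ((M - C) / ε) := by rw [Finset.sum_mul]
          _ ≤ 1 * Real.exp ((M - C) / ε) := by
              apply mul_le_mul_of_nonneg_right ?_ (le_of_lt (Real.exp_pos _))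
              rw [← hνsum]
              exact Finset.sum_le_sum_of_subset_of_nonneg (Finset.filter_subset _ _)
                (fun j _ _ => le_of_lt (hν j))
          _ = Real.exp ((M - C) / ε) := one_mul _
      have h2 : (F x - G x) / G x ≤ Real.exp ((M - C) / ε) * (G x)⁻¹ := by
        rw [div_eq_mul_inv]
        exact mul_le_mul_of_nonneg_right hFG (le_of_lt (inv_pos.mpr hG0))
      calc ε * Real.log (F x) - ε * Real.log (G x)
          = ε * (Real.log (F x) - Real.log (G x)) := by ring
        _ ≤ ε * ((F x - G x) / G x) := mul_le_mul_of_nonneg_left hlog (le_of_lt hε)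
        _ ≤ ε * (Real.exp ((M - C) / ε) * (G x)⁻¹) :=
            mul_le_mul_of_nonneg_left h2 (le_of_lt hε)
        _ = ε * Real.exp ((M - C) / ε) * (G x)⁻¹ := by ring
    calc (∫ x in Ω, (ε * Real.log (F x) - ε * Real.log (G x)) ∂μ)
        ≤ ∫ x in Ω, ε * Real.exp ((M - C) / ε) * (G x)⁻¹ ∂μ := h1
      _ = ε * Real.exp ((M - C) / ε) * D := by
          rw [hDdef, ← integral_const_mul]
  -- final arithmetic
  have hJabs : 0 < |J| := abs_pos.mpr hJne
  have hτJ : 0 < τ * |J| := mul_pos hτ hJabs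
  have hq : 0 < ε * D / (τ * |J|) := by positivity
  have hlogC : Real.log (ε * D / (τ * |J|)) ≤ (C - M) / ε := by
    rw [le_div_iff₀ hε]
    nlinarith [hC]
  have hqexp : ε * D / (τ * |J|) ≤ Real.exp ((C - M) / ε) := by
    calc ε * D / (τ * |J|) = Real.exp (Real.log (ε * D / (τ * |J|))) :=
          (Real.exp_log hq).symm
      _ ≤ Real.exp ((C - M) / ε) := Real.exp_le_exp.mpr hlogC
  have hexpmul : Real.exp ((M - C) / ε) * Real.exp ((C - M) / ε) = 1 := by
    rw [← Real.exp_add]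
    convert Real.exp_zero using 2
    field_simp
    ring
  have hfinal : ε * Real.exp ((M - C) / ε) * D ≤ τ * |J| := by
    have h3 : ε * D ≤ τ * |J| * Real.exp ((C - M) / ε) := by
      rw [div_le_iff₀ hτJ] at hqexp
      linarith
    have h4 := Real.exp_pos ((M - C) / ε)
    nlinarith
  rw [abs_of_nonneg (by rw [hsplit]; exact hnn)]
  calc J - Jtrunc d N Ω μ y ν c ε C ψ
      = ∫ x in Ω, (ε * Real.log (F x) - ε * Real.log (G x)) ∂μ := hsplit
    _ ≤ ε * Real.exp ((M - C) / ε) * D := hup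
    _ ≤ τ * |J| := hfinal
end

section
/- Fix ψ ∈ ℝ^N with J_ε(ψ) ≠ 0 and a tolerance τ > 0. Let C_0 = sup_{x∈Ω} min_{1≤j≤N} c(x,y_j) be the covering cost, M = max_j ψ_j, m = min_j ψ_j, Γ = M − m, and ν_min = min_j ν_j. If the cutoff C satisfies C > C_0 and C ≥ C_0 + Γ + ε·log( ε / (ν_min·τ·|J_ε(ψ)|) ), then the relative truncation error is controlled: 0 ≤ J_ε(ψ) − J̃_ε(ψ;C) ≤ τ·|J_ε(ψ)|. -/
open MeasureTheory

/-- geometric truncation bound. With covering cost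
`C₀ = sup_{x∈Ω} min_j c(x,y_j)`, `M = max_j ψ_j`, `m = min_j ψ_j`, `Γ = M − m`,
`ν_min = min_j ν_j`, if `J_ε(ψ) ≠ 0`, `τ > 0`, `C > C₀` and
`C ≥ C₀ + Γ + ε·log(ε/(ν_min·τ·|J_ε(ψ)|))`, then
`0 ≤ J_ε(ψ) − J̃_ε(ψ;C) ≤ τ·|J_ε(ψ)|`. -/
theorem stmt_17 (d N : ℕ) (hN : 1 ≤ N)
    (Ω : Set (EuclideanSpace ℝ (Fin d))) (hΩne : Ω.Nonempty) (hΩc : IsCompact Ω)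
    (μ : Measure (EuclideanSpace ℝ (Fin d))) [IsProbabilityMeasure μ] (hμΩ : μ Ω = 1)
    (y : Fin N → EuclideanSpace ℝ (Fin d))
    (ν : Fin N → ℝ) (hν : ∀ j, 0 < ν j) (hνsum : ∑ j, ν j = 1)
    (c : EuclideanSpace ℝ (Fin d) → EuclideanSpace ℝ (Fin d) → ℝ)
    (hc : Continuous fun p : EuclideanSpace ℝ (Fin d) × EuclideanSpace ℝ (Fin d) => c p.1 p.2)
    (ε : ℝ) (hε : 0 < ε)
    (ψ : Fin N → ℝ) (hJne : Jdual d N Ω μ y ν c ε ψ ≠ 0)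
    (τ : ℝ) (hτ : 0 < τ)
    (C₀ : ℝ) (hC₀ : C₀ = sSup ((fun x => ⨅ j, c x (y j)) '' Ω))
    (C : ℝ) (hC1 : C₀ < C)
    (hC2 : C₀ + ((⨆ j, ψ j) - (⨅ j, ψ j)) +
        ε * Real.log (ε / ((⨅ j, ν j) * τ * |Jdual d N Ω μ y ν c ε ψ|)) ≤ C) :
    0 ≤ Jdual d N Ω μ y ν c ε ψ - Jtrunc d N Ω μ y ν c ε C ψ ∧
    Jdual d N Ω μ y ν c ε ψ - Jtrunc d N Ω μ y ν c ε C ψ ≤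
      τ * |Jdual d N Ω μ y ν c ε ψ| := by
  classical
  have hNe : Nonempty (Fin N) := ⟨⟨0, hN⟩⟩
  set J : ℝ := Jdual d N Ω μ y ν c ε ψ with hJdef
  set M : ℝ := ⨆ j, ψ j with hMdef
  set m : ℝ := ⨅ j, ψ j with hmdef
  set νmin : ℝ := ⨅ j, ν j with hνmindef
  have hJpos : 0 < |J| := abs_pos.mpr hJne
  have hψM : ∀ j, ψ j ≤ M := fun j => le_ciSup (Set.Finite.bddAbove (Set.finite_range ψ)) j
  have hψm : ∀ j, m ≤ ψ j := fun j => ciInf_le (Set.Finite.bddBelow (Set.finite_range ψ)) j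
  have hνle : ∀ j, νmin ≤ ν j := fun j => ciInf_le (Set.Finite.bddBelow (Set.finite_range ν)) j
  have hνminpos : 0 < νmin := by
    obtain ⟨j, -, hj⟩ := Finset.exists_min_image Finset.univ ν ⟨⟨0, hN⟩, Finset.mem_univ _⟩
    have : ν j ≤ νmin := le_ciInf fun i => hj i (Finset.mem_univ i)
    exact lt_of_lt_of_le (hν j) this
  -- the continuous measure function c x (y j)
  have hcj : ∀ j, Continuous fun x => c x (y j) := fun j =>
    hc.comp (continuous_id.prodMk continuous_const)
  -- every x ∈ Ω has some j with c x (y j) ≤ C₀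
  have hmin : ∀ x ∈ Ω, ∃ j₀, c x (y j₀) ≤ C₀ := by
    intro x hx
    obtain ⟨j₀, -, hj₀⟩ := Finset.exists_min_image Finset.univ (fun j => c x (y j))
      ⟨⟨0, hN⟩, Finset.mem_univ _⟩
    refine ⟨j₀, ?_⟩
    have h1 : c x (y j₀) ≤ ⨅ j, c x (y j) := le_ciInf fun i => hj₀ i (Finset.mem_univ i)
    have hbdd : BddAbove ((fun x => ⨅ j, c x (y j)) '' Ω) := by
      obtain ⟨B, hB⟩ := (hΩc.bddAbove_image ((hcj ⟨0, hN⟩).continuousOn))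
      refine ⟨B, ?_⟩
      rintro z ⟨x', hx', rfl⟩
      have : (⨅ j, c x' (y j)) ≤ c x' (y ⟨0, hN⟩) :=
        ciInf_le (Set.Finite.bddBelow (Set.finite_range _)) _
      exact this.trans (hB ⟨x', hx', rfl⟩)
    have h2 : (⨅ j, c x (y j)) ≤ C₀ := hC₀ ▸ le_csSup hbdd ⟨x, hx, rfl⟩
    linarith
  set S : EuclideanSpace ℝ (Fin d) → ℝ :=
    fun x => ∑ j, ν j * Real.exp ((ψ j - c x (y j)) / ε) with hSdef
  set St : EuclideanSpace ℝ (Fin d) → ℝ := Strunc d N y ν c ε C ψ with hStdef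
  have hterm_pos : ∀ x j, 0 < ν j * Real.exp ((ψ j - c x (y j)) / ε) := fun x j =>
    mul_pos (hν j) (Real.exp_pos _)
  have hSpos : ∀ x, 0 < S x := fun x =>
    Finset.sum_pos (fun j _ => hterm_pos x j) ⟨⟨0, hN⟩, Finset.mem_univ _⟩
  -- key pointwise estimate
  have key : ∀ x ∈ Ω, 0 ≤ ε * Real.log (S x) - ε * Real.log (St x) ∧
      ε * Real.log (S x) - ε * Real.log (St x) ≤ τ * |J| := by
    intro x hx
    obtain ⟨j₀, hj₀⟩ := hmin x hx
    have hj₀mem : j₀ ∈ Finset.univ.filter (fun j => c x (y j) < C) := by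
      simp [lt_of_le_of_lt hj₀ hC1]
    have hStpos : 0 < St x := by
      rw [hStdef, Strunc]
      exact Finset.sum_pos (fun j _ => hterm_pos x j) ⟨j₀, hj₀mem⟩
    have hSSt : St x ≤ S x := by
      rw [hStdef, Strunc, hSdef]
      exact Finset.sum_le_sum_of_subset_of_nonneg (Finset.filter_subset _ _)
        (fun j _ _ => (hterm_pos x j).le)
    have hlog0 : Real.log (St x) ≤ Real.log (S x) := Real.log_le_log hStpos hSSt
    constructor
    · nlinarith
    -- upper bound
    have hdiff : S x - St x ≤ Real.exp ((M - C) / ε) := by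
      have hsplit : St x + ∑ j ∈ Finset.univ.filter (fun j => ¬ c x (y j) < C),
          ν j * Real.exp ((ψ j - c x (y j)) / ε) = S x := by
        rw [hStdef, Strunc, hSdef]
        exact Finset.sum_filter_add_sum_filter_not _ _ _
      have hle : ∑ j ∈ Finset.univ.filter (fun j => ¬ c x (y j) < C),
          ν j * Real.exp ((ψ j - c x (y j)) / ε) ≤ Real.exp ((M - C) / ε) := by
        calc ∑ j ∈ Finset.univ.filter (fun j => ¬ c x (y j) < C),
              ν j * Real.exp ((ψ j - c x (y j)) / ε)
            ≤ ∑ j ∈ Finset.univ.filter (fun j => ¬ c x (y j) < C),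
              ν j * Real.exp ((M - C) / ε) := by
              refine Finset.sum_le_sum fun j hj => ?_
              have hCle : C ≤ c x (y j) := not_lt.mp (Finset.mem_filter.mp hj).2
              have : (ψ j - c x (y j)) / ε ≤ (M - C) / ε :=
                div_le_div_of_nonneg_right (by linarith [hψM j]) hε.le
              exact mul_le_mul_of_nonneg_left (Real.exp_le_exp.mpr this) (hν j).le
          _ = (∑ j ∈ Finset.univ.filter (fun j => ¬ c x (y j) < C), ν j)
              * Real.exp ((M - C) / ε) := by rw [Finset.sum_mul]
          _ ≤ 1 * Real.exp ((M - C) / ε) := by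
              refine mul_le_mul_of_nonneg_right ?_ (Real.exp_pos _).le
              calc (∑ j ∈ Finset.univ.filter (fun j => ¬ c x (y j) < C), ν j)
                  ≤ ∑ j, ν j := Finset.sum_le_sum_of_subset_of_nonneg
                    (Finset.filter_subset _ _) (fun j _ _ => (hν j).le)
                _ = 1 := hνsum
          _ = Real.exp ((M - C) / ε) := one_mul _
      linarith
    have hStlb : νmin * Real.exp ((m - C₀) / ε) ≤ St x := by
      have h1 : νmin * Real.exp ((m - C₀) / ε)
          ≤ ν j₀ * Real.exp ((ψ j₀ - c x (y j₀)) / ε) := by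
        refine mul_le_mul (hνle j₀) (Real.exp_le_exp.mpr ?_) (Real.exp_pos _).le (hν j₀).le
        exact div_le_div_of_nonneg_right (by linarith [hψm j₀]) hε.le
      refine h1.trans ?_
      rw [hStdef, Strunc]
      exact Finset.single_le_sum (fun j _ => (hterm_pos x j).le) hj₀mem
    have hStlbpos : 0 < νmin * Real.exp ((m - C₀) / ε) :=
      mul_pos hνminpos (Real.exp_pos _)
    have hratio : Real.log (S x) - Real.log (St x) ≤ (S x - St x) / St x := by
      have h := Real.log_le_sub_one_of_pos (div_pos (hSpos x) hStpos)
      rw [Real.log_div (hSpos x).ne' hStpos.ne'] at h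
      have : S x / St x - 1 = (S x - St x) / St x := by
        field_simp
      linarith
    have hchain : ε * Real.log (S x) - ε * Real.log (St x)
        ≤ ε / νmin * Real.exp ((M - C - m + C₀) / ε) := by
      have h1 : ε * (Real.log (S x) - Real.log (St x)) ≤ ε * ((S x - St x) / St x) :=
        mul_le_mul_of_nonneg_left hratio hε.le
      have h2 : (S x - St x) / St x
          ≤ Real.exp ((M - C) / ε) / (νmin * Real.exp ((m - C₀) / ε)) := by
        apply div_le_div₀ (Real.exp_pos _).le hdiff hStlbpos hStlb
      have h3 : Real.exp ((M - C) / ε) / (νmin * Real.exp ((m - C₀) / ε))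
          = (1 / νmin) * Real.exp ((M - C - m + C₀) / ε) := by
        rw [show (M - C - m + C₀) / ε = (M - C) / ε - (m - C₀) / ε by ring,
          Real.exp_sub]
        field_simp
      have h4 : ε * ((S x - St x) / St x)
          ≤ ε * ((1 / νmin) * Real.exp ((M - C - m + C₀) / ε)) := by
        refine mul_le_mul_of_nonneg_left ?_ hε.le
        rw [← h3]; exact h2
      calc ε * Real.log (S x) - ε * Real.log (St x)
          = ε * (Real.log (S x) - Real.log (St x)) := by ring
        _ ≤ ε * ((S x - St x) / St x) := h1
        _ ≤ ε * ((1 / νmin) * Real.exp ((M - C - m + C₀) / ε)) := h4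
        _ = ε / νmin * Real.exp ((M - C - m + C₀) / ε) := by ring
    refine hchain.trans ?_
    -- final: ε/νmin * exp((M - C - m + C₀)/ε) ≤ τ|J|
    set t : ℝ := ε / (νmin * τ * |J|) with htdef
    have htpos : 0 < t := div_pos hε (by positivity)
    have hexp : Real.exp ((M - C - m + C₀) / ε) ≤ νmin * τ * |J| / ε := by
      have h1 : (M - C - m + C₀) / ε ≤ - Real.log t := by
        have hlin : M - C - m + C₀ ≤ ε * (- Real.log t) := by
          have hrg : ε * (- Real.log t) = -(ε * Real.log t) := by ring
          linarith [hC2]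
        calc (M - C - m + C₀) / ε ≤ (ε * (- Real.log t)) / ε :=
            div_le_div_of_nonneg_right hlin hε.le
          _ = - Real.log t := by field_simp
      calc Real.exp ((M - C - m + C₀) / ε) ≤ Real.exp (- Real.log t) :=
          Real.exp_le_exp.mpr h1
        _ = t⁻¹ := by rw [Real.exp_neg, Real.exp_log htpos]
        _ = νmin * τ * |J| / ε := by
            rw [htdef]; field_simp
    calc ε / νmin * Real.exp ((M - C - m + C₀) / ε)
        ≤ ε / νmin * (νmin * τ * |J| / ε) := by
          exact mul_le_mul_of_nonneg_left hexp (by positivity)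
      _ = τ * |J| := by field_simp
  -- measurability & integrability
  have hΩmeas : MeasurableSet Ω := hΩc.isClosed.measurableSet
  have hScont : Continuous S := by
    apply continuous_finset_sum
    intro j _
    exact continuous_const.mul ((Real.continuous_exp.comp
      ((continuous_const.sub (hcj j)).div_const ε)))
  have hgcont : ContinuousOn (fun x => ε * Real.log (S x)) Ω := by
    exact (continuous_const.continuousOn).mul
      ((hScont.continuousOn).log (fun x _ => (hSpos x).ne'))
  have hg : IntegrableOn (fun x => ε * Real.log (S x)) Ω μ :=
    hgcont.integrableOn_compact hΩc
  have hStmeas : Measurable St := by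
    have : St = fun x => ∑ j, if c x (y j) < C then
        ν j * Real.exp ((ψ j - c x (y j)) / ε) else 0 := by
      funext x
      rw [hStdef, Strunc, Finset.sum_filter]
    rw [this]
    refine Finset.measurable_sum _ fun j _ => ?_
    refine Measurable.ite ?_ ?_ measurable_const
    · exact measurableSet_lt ((hcj j).measurable) measurable_const
    · exact (measurable_const.mul ((Real.measurable_exp.comp
        (((measurable_const.sub (hcj j).measurable)).div_const ε))))
  have hhmeas : Measurable (fun x => ε * Real.log (St x)) :=
    measurable_const.mul (Real.measurable_log.comp hStmeas)
  obtain ⟨Kg, hKg⟩ := hΩc.exists_bound_of_continuousOn hgcont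
  have hh : IntegrableOn (fun x => ε * Real.log (St x)) Ω μ := by
    refine Integrable.mono' (integrable_const (Kg + τ * |J|))
      hhmeas.aestronglyMeasurable ?_
    refine (ae_restrict_iff' hΩmeas).mpr (Filter.Eventually.of_forall fun x hx => ?_)
    obtain ⟨h1, h2⟩ := key x hx
    have hgb := hKg x hx
    rw [Real.norm_eq_abs] at hgb ⊢
    have hτJ : 0 ≤ τ * |J| := by positivity
    rw [abs_le] at hgb ⊢
    constructor <;> nlinarith
  -- now conclude
  have hsub : J - Jtrunc d N Ω μ y ν c ε C ψ
      = ∫ x in Ω, (ε * Real.log (S x) - ε * Real.log (St x)) ∂μ := by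
    rw [integral_sub hg hh]
    simp only [hJdef, Jdual, Jtrunc, hStdef, hSdef]
    ring
  constructor
  · rw [hsub]
    exact setIntegral_nonneg hΩmeas fun x hx => (key x hx).1
  · rw [hsub]
    have hmono : ∫ x in Ω, (ε * Real.log (S x) - ε * Real.log (St x)) ∂μ
        ≤ ∫ _x in Ω, τ * |J| ∂μ := by
      refine setIntegral_mono_on (hg.sub hh) ((integrableOn_const_iff (C := τ * |J|) enorm_ne_top).mpr (Or.inr ?_))
        hΩmeas (fun x hx => (key x hx).2)
      rw [hμΩ]; exact ENNReal.one_lt_top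
    refine hmono.trans ?_
    rw [setIntegral_const, measureReal_def, hμΩ]
    simp
end
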